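/- arXiv:1605.02970 — 3 statements merged into one kernel-verified Lean document; each statement's English description precedes it below -/
import Mathlib

section
/- The map λ ↦ x(λ), where x(λ) is the unique maximizer over Q of −f(x) − ⟨A₁ᵀλ¹ + A₂ᵀλ², x⟩, is Lipschitz: for all λ, μ, ‖x(λ) − x(μ)‖ ≤ (1/ν)‖A₁ᵀ(λ¹−μ¹) + A₂ᵀ(λ²−μ²)‖. -/
open scoped RealInnerProductSpace

/-- Key step: if `x` maximizes `-f y - ⟪v, y⟫` over a set `Q` on which `f` is `ν`-strongly
convex, then for any `b ∈ Q`, `ν/2 * ‖x - b‖² ≤ (f b + ⟪v, b⟫) - (f x + ⟪v, x⟫)`. -/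
lemma strong_convex_min_gap {E : Type*} [NormedAddCommGroup E] [InnerProductSpace ℝ E]
    (Q : Set E) (f : E → ℝ) (ν : ℝ) (hf : StrongConvexOn Q ν f)
    (v : E) (a b : E) (haQ : a ∈ Q) (hbQ : b ∈ Q)
    (hmax : IsMaxOn (fun y : E => -f y - ⟪v, y⟫) Q a) :
    ν / 2 * ‖a - b‖ ^ 2 ≤ (f b + ⟪v, b⟫) - (f a + ⟪v, a⟫) := by
  have key : ∀ t ∈ Set.Ioo (0:ℝ) 1,
      (1 - t) * (ν / 2 * ‖a - b‖ ^ 2) ≤ (f b + ⟪v, b⟫) - (f a + ⟪v, a⟫) := by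
    intro t ht
    obtain ⟨ht0, ht1⟩ := ht
    have hz : (1 - t) • a + t • b ∈ Q :=
      hf.1 haQ hbQ (by linarith) ht0.le (by ring)
    have hsc := hf.2 haQ hbQ (show (0:ℝ) ≤ 1 - t by linarith) ht0.le
      (show (1 - t) + t = 1 by ring)
    have hm := hmax hz
    simp only [Set.mem_setOf_eq] at hm
    have hinner : ⟪v, (1 - t) • a + t • b⟫ = (1 - t) * ⟪v, a⟫ + t * ⟪v, b⟫ := by
      rw [inner_add_right, real_inner_smul_right, real_inner_smul_right]
    simp only [smul_eq_mul] at hsc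
    nlinarith [hsc, hm, hinner]
  have htend : Filter.Tendsto (fun t : ℝ => (1 - t) * (ν / 2 * ‖a - b‖ ^ 2))
      (nhdsWithin 0 (Set.Ioi (0:ℝ))) (nhds (ν / 2 * ‖a - b‖ ^ 2)) := by
    have : Filter.Tendsto (fun t : ℝ => (1 - t) * (ν / 2 * ‖a - b‖ ^ 2))
        (nhds 0) (nhds ((1 - 0) * (ν / 2 * ‖a - b‖ ^ 2))) := by
      exact (Continuous.mul (by continuity) continuous_const).tendsto 0
    simpa using this.mono_left nhdsWithin_le_nhds
  refine le_of_tendsto htend ?_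
  filter_upwards [Ioo_mem_nhdsGT_of_mem (by constructor <;> norm_num :
    (0:ℝ) ∈ Set.Ico (0:ℝ) 1)] with t ht using key t ht

/-- Lipschitz continuity of the map `λ ↦ x(λ)`: if `x₁` maximizes
`-f x - ⟨A₁ᵀ λ¹ + A₂ᵀ λ², x⟩` over `Q` and `x₂` maximizes the same objective for `μ`, then
`‖x₁ - x₂‖ ≤ (1/ν) ‖A₁ᵀ (λ¹ - μ¹) + A₂ᵀ (λ² - μ²)‖`. -/
theorem dual_maximizer_lipschitz
    (E H₁ H₂ : Type*) [NormedAddCommGroup E] [InnerProductSpace ℝ E] [FiniteDimensional ℝ E]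
    [NormedAddCommGroup H₁] [InnerProductSpace ℝ H₁] [FiniteDimensional ℝ H₁]
    [NormedAddCommGroup H₂] [InnerProductSpace ℝ H₂] [FiniteDimensional ℝ H₂]
    (Q : Set E) (hQne : Q.Nonempty) (hQclosed : IsClosed Q) (hQconv : Convex ℝ Q)
    (A₁ : E →L[ℝ] H₁) (A₂ : E →L[ℝ] H₂)
    (f : E → ℝ) (ν : ℝ) (hν : 0 < ν) (hf : StrongConvexOn Q ν f)
    (l₁ m₁ : H₁) (l₂ m₂ : H₂) (x₁ x₂ : E)
    (hx₁Q : x₁ ∈ Q)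
    (hx₁ : IsMaxOn (fun y : E => -f y - ⟪ContinuousLinearMap.adjoint A₁ l₁ +
      ContinuousLinearMap.adjoint A₂ l₂, y⟫) Q x₁)
    (hx₂Q : x₂ ∈ Q)
    (hx₂ : IsMaxOn (fun y : E => -f y - ⟪ContinuousLinearMap.adjoint A₁ m₁ +
      ContinuousLinearMap.adjoint A₂ m₂, y⟫) Q x₂) :
    ‖x₁ - x₂‖ ≤ (1 / ν) *
      ‖ContinuousLinearMap.adjoint A₁ (l₁ - m₁) + ContinuousLinearMap.adjoint A₂ (l₂ - m₂)‖ := by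
  set v₁ := ContinuousLinearMap.adjoint A₁ l₁ + ContinuousLinearMap.adjoint A₂ l₂ with hv₁
  set v₂ := ContinuousLinearMap.adjoint A₁ m₁ + ContinuousLinearMap.adjoint A₂ m₂ with hv₂
  have hw : ContinuousLinearMap.adjoint A₁ (l₁ - m₁) + ContinuousLinearMap.adjoint A₂ (l₂ - m₂)
      = v₁ - v₂ := by
    simp only [map_sub, hv₁, hv₂]; abel
  rw [hw]
  have h1 := strong_convex_min_gap Q f ν hf v₁ x₁ x₂ hx₁Q hx₂Q hx₁
  have h2 := strong_convex_min_gap Q f ν hf v₂ x₂ x₁ hx₂Q hx₁Q hx₂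
  rw [show ‖x₂ - x₁‖ = ‖x₁ - x₂‖ from norm_sub_rev _ _] at h2
  have hsum : ν * ‖x₁ - x₂‖ ^ 2 ≤ ⟪v₁ - v₂, x₂ - x₁⟫ := by
    have : ⟪v₁ - v₂, x₂ - x₁⟫ = (⟪v₁, x₂⟫ - ⟪v₁, x₁⟫) + (⟪v₂, x₁⟫ - ⟪v₂, x₂⟫) := by
      rw [inner_sub_left, inner_sub_right, inner_sub_right]; ring
    rw [this]; nlinarith [h1, h2]
  have hCS : ⟪v₁ - v₂, x₂ - x₁⟫ ≤ ‖v₁ - v₂‖ * ‖x₁ - x₂‖ := by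
    calc ⟪v₁ - v₂, x₂ - x₁⟫ ≤ ‖v₁ - v₂‖ * ‖x₂ - x₁‖ := real_inner_le_norm _ _
    _ = ‖v₁ - v₂‖ * ‖x₁ - x₂‖ := by rw [norm_sub_rev x₂ x₁]
  rcases eq_or_lt_of_le (norm_nonneg (x₁ - x₂)) with h0 | h0
  · rw [← h0]
    positivity
  · have hkey : ν * ‖x₁ - x₂‖ ^ 2 ≤ ‖v₁ - v₂‖ * ‖x₁ - x₂‖ := hsum.trans hCS
    rw [one_div, inv_mul_eq_div, le_div_iff₀ hν]
    nlinarith [hkey, h0]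
end

section
/- The gradient of the dual function φ is Lipschitz continuous with constant L = (‖A₁‖² + ‖A₂‖²)/ν, i.e., ‖∇φ(λ) − ∇φ(μ)‖ ≤ L‖λ − μ‖ for all λ, μ, where ∇φ(λ) = (b₁ − A₁x(λ), b₂ − A₂x(λ)). -/
open scoped RealInnerProductSpace
open Topology Filter
set_option maxHeartbeats 1000000

/-- The gradient `∇φ(λ) = (b₁ - A₁ x(λ), b₂ - A₂ x(λ))` of the dual function is Lipschitz
continuous with constant `L = (‖A₁‖² + ‖A₂‖²)/ν`, where the norm on `H₁ × H₂` is the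
Euclidean product norm `‖λ‖² = ‖λ¹‖² + ‖λ²‖²`. -/
theorem dual_gradient_lipschitz
    (E H₁ H₂ : Type*) [NormedAddCommGroup E] [InnerProductSpace ℝ E] [FiniteDimensional ℝ E]
    [NormedAddCommGroup H₁] [InnerProductSpace ℝ H₁] [FiniteDimensional ℝ H₁]
    [NormedAddCommGroup H₂] [InnerProductSpace ℝ H₂] [FiniteDimensional ℝ H₂]
    (Q : Set E) (hQne : Q.Nonempty) (hQclosed : IsClosed Q) (hQconv : Convex ℝ Q)
    (A₁ : E →L[ℝ] H₁) (A₂ : E →L[ℝ] H₂) (b₁ : H₁) (b₂ : H₂)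
    (f : E → ℝ) (ν : ℝ) (hν : 0 < ν) (hf : StrongConvexOn Q ν f)
    (x : H₁ × H₂ → E)
    (hxQ : ∀ l : H₁ × H₂, x l ∈ Q)
    (hxmax : ∀ l : H₁ × H₂,
      IsMaxOn (fun y : E => -f y - ⟪l.1, A₁ y⟫ - ⟪l.2, A₂ y⟫) Q (x l)) :
    ∀ l μ : H₁ × H₂,
      Real.sqrt (‖(b₁ - A₁ (x l)) - (b₁ - A₁ (x μ))‖ ^ 2 +
          ‖(b₂ - A₂ (x l)) - (b₂ - A₂ (x μ))‖ ^ 2) ≤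
        ((‖A₁‖ ^ 2 + ‖A₂‖ ^ 2) / ν) *
          Real.sqrt (‖l.1 - μ.1‖ ^ 2 + ‖l.2 - μ.2‖ ^ 2) := by
  intro l μ
  -- Key: x p minimizes F_p = f + linear, which is ν-strongly convex, so growth bound holds
  have key : ∀ (p : H₁ × H₂) (y : E), y ∈ Q →
      f (x p) + ⟪p.1, A₁ (x p)⟫ + ⟪p.2, A₂ (x p)⟫ + ν / 2 * ‖y - x p‖ ^ 2
        ≤ f y + ⟪p.1, A₁ y⟫ + ⟪p.2, A₂ y⟫ := by
    intro p y hy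
    set C : ℝ := ν / 2 * ‖y - x p‖ ^ 2 with hC
    have hstep : ∀ t : ℝ, t ∈ Set.Ioo (0:ℝ) 1 →
        (1 - t) * C ≤ (f y + ⟪p.1, A₁ y⟫ + ⟪p.2, A₂ y⟫)
          - (f (x p) + ⟪p.1, A₁ (x p)⟫ + ⟪p.2, A₂ (x p)⟫) := by
      intro t ht
      obtain ⟨ht0, ht1⟩ := ht
      have hz : t • y + (1 - t) • x p ∈ Q :=
        hQconv hy (hxQ p) ht0.le (by linarith) (by ring)
      have h1 := hf.2 hy (hxQ p) ht0.le (by linarith : (0:ℝ) ≤ 1 - t) (by ring)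
      have h2 := (hxmax p) hz
      simp only [smul_eq_mul] at h1
      simp only [Set.mem_setOf_eq] at h2
      have e1 : ⟪p.1, A₁ (t • y + (1 - t) • x p)⟫
          = t * ⟪p.1, A₁ y⟫ + (1 - t) * ⟪p.1, A₁ (x p)⟫ := by
        rw [map_add, map_smul, map_smul, inner_add_right, real_inner_smul_right,
          real_inner_smul_right]
      have e2 : ⟪p.2, A₂ (t • y + (1 - t) • x p)⟫
          = t * ⟪p.2, A₂ y⟫ + (1 - t) * ⟪p.2, A₂ (x p)⟫ := by
        rw [map_add, map_smul, map_smul, inner_add_right, real_inner_smul_right,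
          real_inner_smul_right]
      rw [e1, e2] at h2
      have h3 : t * ((1 - t) * (ν / 2 * ‖y - x p‖ ^ 2)) ≤
          t * ((f y + ⟪p.1, A₁ y⟫ + ⟪p.2, A₂ y⟫)
            - (f (x p) + ⟪p.1, A₁ (x p)⟫ + ⟪p.2, A₂ (x p)⟫)) := by
        nlinarith [h1, h2]
      rw [hC]
      exact le_of_mul_le_mul_left h3 ht0
    have hlim : Filter.Tendsto (fun t : ℝ => (1 - t) * C) (nhdsWithin 0 (Set.Ioi 0))
        (𝓝 ((1 - 0) * C)) :=
      ((tendsto_const_nhds.sub Filter.tendsto_id).mul tendsto_const_nhds).mono_left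
        nhdsWithin_le_nhds
    have hmem : Set.Ioo (0:ℝ) 1 ∈ nhdsWithin 0 (Set.Ioi 0) :=
      Ioo_mem_nhdsGT_of_mem ⟨le_refl _, one_pos⟩
    have hfin := le_of_tendsto hlim (Filter.eventually_of_mem hmem hstep)
    simp only [sub_zero, one_mul] at hfin
    linarith
  have h1 := key l (x μ) (hxQ μ)
  have h2 := key μ (x l) (hxQ l)
  have hsym : ‖x μ - x l‖ = ‖x l - x μ‖ := norm_sub_rev _ _
  set d := ‖x l - x μ‖ with hdd
  have hdnn : 0 ≤ d := norm_nonneg _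
  have hd : ν * d ^ 2 ≤ ⟪l.1 - μ.1, A₁ (x μ) - A₁ (x l)⟫
      + ⟪l.2 - μ.2, A₂ (x μ) - A₂ (x l)⟫ := by
    simp only [inner_sub_left, inner_sub_right]
    rw [hsym] at h1
    linarith
  set a₁ := ‖A₁‖ with ha₁; set a₂ := ‖A₂‖ with ha₂
  set c₁ := ‖l.1 - μ.1‖ with hc₁; set c₂ := ‖l.2 - μ.2‖ with hc₂
  have hb1 : ⟪l.1 - μ.1, A₁ (x μ) - A₁ (x l)⟫ ≤ c₁ * (a₁ * d) := by
    refine (real_inner_le_norm _ _).trans ?_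
    have : A₁ (x μ) - A₁ (x l) = A₁ (x μ - x l) := (map_sub A₁ _ _).symm
    rw [this]
    have := A₁.le_opNorm (x μ - x l)
    rw [hsym] at this
    exact mul_le_mul_of_nonneg_left this (norm_nonneg _)
  have hb2 : ⟪l.2 - μ.2, A₂ (x μ) - A₂ (x l)⟫ ≤ c₂ * (a₂ * d) := by
    refine (real_inner_le_norm _ _).trans ?_
    have : A₂ (x μ) - A₂ (x l) = A₂ (x μ - x l) := (map_sub A₂ _ _).symm
    rw [this]
    have := A₂.le_opNorm (x μ - x l)
    rw [hsym] at this
    exact mul_le_mul_of_nonneg_left this (norm_nonneg _)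
  set S := Real.sqrt (a₁ ^ 2 + a₂ ^ 2) with hS
  set T := Real.sqrt (c₁ ^ 2 + c₂ ^ 2) with hT
  have hS2 : S ^ 2 = a₁ ^ 2 + a₂ ^ 2 := Real.sq_sqrt (by positivity)
  have hT2 : T ^ 2 = c₁ ^ 2 + c₂ ^ 2 := Real.sq_sqrt (by positivity)
  have hSnn : 0 ≤ S := Real.sqrt_nonneg _
  have hTnn : 0 ≤ T := Real.sqrt_nonneg _
  have ha₁nn : 0 ≤ a₁ := norm_nonneg _
  have ha₂nn : 0 ≤ a₂ := norm_nonneg _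
  have hc₁nn : 0 ≤ c₁ := norm_nonneg _
  have hc₂nn : 0 ≤ c₂ := norm_nonneg _
  have hCS : c₁ * a₁ + c₂ * a₂ ≤ S * T := by
    have hsq : (c₁ * a₁ + c₂ * a₂) ^ 2 ≤ (S * T) ^ 2 := by
      have : (c₁ * a₁ + c₂ * a₂) ^ 2 ≤ (a₁ ^ 2 + a₂ ^ 2) * (c₁ ^ 2 + c₂ ^ 2) := by
        nlinarith [sq_nonneg (a₁ * c₂ - a₂ * c₁)]
      calc (c₁ * a₁ + c₂ * a₂) ^ 2 ≤ (a₁ ^ 2 + a₂ ^ 2) * (c₁ ^ 2 + c₂ ^ 2) := this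
        _ = (S * T) ^ 2 := by rw [mul_pow, hS2, hT2]
    have h' := Real.sqrt_le_sqrt hsq
    rwa [Real.sqrt_sq (by positivity), Real.sqrt_sq (mul_nonneg hSnn hTnn)] at h'
  have hνd : ν * d ≤ S * T := by
    rcases eq_or_lt_of_le hdnn with h | h
    · rw [← h]; simpa using mul_nonneg hSnn hTnn
    · have : ν * d ^ 2 ≤ S * T * d := by nlinarith
      nlinarith
  -- bound the LHS
  have e1 : (b₁ - A₁ (x l)) - (b₁ - A₁ (x μ)) = A₁ (x μ) - A₁ (x l) := by abel
  have e2 : (b₂ - A₂ (x l)) - (b₂ - A₂ (x μ)) = A₂ (x μ) - A₂ (x l) := by abel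
  have n1 : ‖A₁ (x μ) - A₁ (x l)‖ ≤ a₁ * d := by
    rw [(map_sub A₁ _ _).symm]
    have := A₁.le_opNorm (x μ - x l); rwa [hsym] at this
  have n2 : ‖A₂ (x μ) - A₂ (x l)‖ ≤ a₂ * d := by
    rw [(map_sub A₂ _ _).symm]
    have := A₂.le_opNorm (x μ - x l); rwa [hsym] at this
  rw [e1, e2]
  calc Real.sqrt (‖A₁ (x μ) - A₁ (x l)‖ ^ 2 + ‖A₂ (x μ) - A₂ (x l)‖ ^ 2)
      ≤ Real.sqrt ((a₁ * d) ^ 2 + (a₂ * d) ^ 2) := by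
        apply Real.sqrt_le_sqrt
        have := norm_nonneg (A₁ (x μ) - A₁ (x l))
        have := norm_nonneg (A₂ (x μ) - A₂ (x l))
        nlinarith
    _ = S * d := by
        rw [show (a₁ * d) ^ 2 + (a₂ * d) ^ 2 = (a₁ ^ 2 + a₂ ^ 2) * d ^ 2 by ring,
          Real.sqrt_mul (by positivity), Real.sqrt_sq hdnn]
    _ ≤ ((a₁ ^ 2 + a₂ ^ 2) / ν) * T := by
        rw [div_mul_eq_mul_div, le_div_iff₀ hν]
        nlinarith [mul_le_mul_of_nonneg_left hνd hSnn]
end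

section
/- For the regularized optimal transport objective F(X) = γ Σ_{i,j} x_{ij} ln x_{ij} + Σ_{i,j} c_{ij} x_{ij} with γ > 0, F is γ-strongly convex with respect to the ℓ₁ norm on the transportation polytope {X ∈ ℝ_+^{p×p} : Xe = a₁, Xᵀe = a₂} with a₁, a₂ in the unit simplex (so that Σ_{i,j} x_{ij} = 1). -/
/-!
For `t > 0`, `t log t - t + 1 ≥ (3/2) (t - 1)² / (t + 2)`: the difference vanishes at `t = 1`
together with its derivative, and that derivative is increasing, its own derivative being
`(t - 1)² (t + 8) / (t (t + 2)³)`. Scaling by `t = y / x` turns this into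
`D(x, y) ≥ (3/2) (y - x)² / (y + 2x)` for the Bregman divergence `D` of `t ↦ t log t`.
Cauchy–Schwarz with the weights `y + 2x`, whose total is `3` when `X` and `Y` both have mass `1`,
gives the Pinsker-type bound `(∑ |y - x|)² ≤ 2 ∑ D(x, y)`, and
`F(Y) - F(X) - ⟨∇F(X), Y - X⟩ = γ ∑ D(x, y)` since the linear cost term cancels.
-/

open Finset Real

noncomputable def bregmanMulLog (x y : ℝ) : ℝ :=
  y * log y - x * log x - (log x + 1) * (y - x)

namespace PinskerGap

noncomputable def gap (t : ℝ) : ℝ :=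
  t * log t - t + 1 - 3 / 2 * ((t - 1) ^ 2 / (t + 2))

noncomputable def gapDeriv (t : ℝ) : ℝ :=
  log t - 3 / 2 * ((t - 1) * (t + 5) / (t + 2) ^ 2)

lemma hasDerivAt_gap {t : ℝ} (ht : 0 < t) : HasDerivAt gap (gapDeriv t) t := by
  have ht2 : t + 2 ≠ 0 := by linarith
  have hmulLog := (hasDerivAt_id t).mul (hasDerivAt_log ht.ne')
  have hquot := (((hasDerivAt_id t).sub_const 1).pow 2).div ((hasDerivAt_id t).add_const 2) ht2
  refine (((hmulLog.sub (hasDerivAt_id t)).add_const 1).sub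
    (hquot.const_mul (3 / 2))).congr_deriv ?_
  simp only [gapDeriv, id_eq, Pi.pow_apply]
  field_simp
  ring

lemma hasDerivAt_gapDeriv {t : ℝ} (ht : 0 < t) :
    HasDerivAt gapDeriv ((t - 1) ^ 2 * (t + 8) / (t * (t + 2) ^ 3)) t := by
  have ht2 : (t + 2) ^ 2 ≠ 0 := by positivity
  have hquot := (((hasDerivAt_id t).sub_const 1).mul ((hasDerivAt_id t).add_const 5)).div
    (((hasDerivAt_id t).add_const 2).pow 2) ht2
  refine ((hasDerivAt_log ht.ne').sub (hquot.const_mul (3 / 2))).congr_deriv ?_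
  simp only [id_eq, Pi.pow_apply, Pi.mul_apply]
  field_simp
  ring

lemma monotoneOn_gapDeriv : MonotoneOn gapDeriv (Set.Ioi 0) := by
  refine monotoneOn_of_hasDerivWithinAt_nonneg (convex_Ioi 0)
    (fun t ht => (hasDerivAt_gapDeriv ht).continuousAt.continuousWithinAt)
    (fun t ht => (hasDerivAt_gapDeriv (interior_subset ht)).hasDerivWithinAt) ?_
  intro t ht
  rw [interior_Ioi, Set.mem_Ioi] at ht
  have : 0 < t + 8 := by linarith
  positivity

lemma gap_nonneg {t : ℝ} (ht : 0 < t) : 0 ≤ gap t := by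
  have hderiv1 : gapDeriv 1 = 0 := by norm_num [gapDeriv]
  have hmin : IsMinOn gap (Set.Ioi 0) 1 := by
    refine isMinOn_Ioi_of_deriv (hasDerivAt_gap one_pos).continuousAt
      (fun s hs => (hasDerivAt_gap hs.1).differentiableAt.differentiableWithinAt)
      (fun s hs => (hasDerivAt_gap (one_pos.trans hs)).differentiableAt.differentiableWithinAt)
      (fun s hs => ?_) (fun s hs => ?_)
    · rw [(hasDerivAt_gap hs.1).deriv, ← hderiv1]
      exact monotoneOn_gapDeriv hs.1 (Set.mem_Ioi.2 one_pos) hs.2.le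
    · rw [(hasDerivAt_gap (one_pos.trans hs)).deriv, ← hderiv1]
      exact monotoneOn_gapDeriv (Set.mem_Ioi.2 one_pos) (Set.mem_Ioi.2 (one_pos.trans hs)) hs.le
  simpa [gap] using hmin ht

end PinskerGap

lemma three_halves_mul_sq_div_le_bregmanMulLog {x y : ℝ} (hx : 0 < x) (hy : 0 < y) :
    3 / 2 * ((y - x) ^ 2 / (y + 2 * x)) ≤ bregmanMulLog x y := by
  have hgap := mul_nonneg hx.le (PinskerGap.gap_nonneg (div_pos hy hx))
  have hscale : x * PinskerGap.gap (y / x)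
      = bregmanMulLog x y - 3 / 2 * ((y - x) ^ 2 / (y + 2 * x)) := by
    have hyx : y + 2 * x ≠ 0 := by positivity
    simp only [PinskerGap.gap, bregmanMulLog, log_div hy.ne' hx.ne']
    field_simp
    ring
  linarith

theorem sq_sum_abs_sub_le_two_mul_sum_bregmanMulLog {ι : Type*} [Fintype ι] {x y : ι → ℝ}
    (hx : ∀ i, 0 < x i) (hy : ∀ i, 0 < y i) (hxy : ∑ i, y i = ∑ i, x i) :
    (∑ i, |y i - x i|) ^ 2 ≤ 2 * (∑ i, x i) * ∑ i, bregmanMulLog (x i) (y i) := by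
  have hweight : ∑ i, (y i + 2 * x i) = 3 * ∑ i, x i := by
    rw [sum_add_distrib, ← mul_sum, hxy]
    ring
  have hw : ∀ i, 0 < y i + 2 * x i := fun i => by linarith [hx i, hy i]
  have hcauchySchwarz : (∑ i, |y i - x i|) ^ 2
      ≤ (∑ i, (y i - x i) ^ 2 / (y i + 2 * x i)) * ∑ i, (y i + 2 * x i) := by
    refine sum_sq_le_sum_mul_sum_of_sq_le_mul univ (fun i _ => div_nonneg (sq_nonneg _) (hw i).le)
      (fun i _ => (hw i).le) (fun i _ => le_of_eq ?_)
    rw [sq_abs, div_mul_cancel₀ _ (hw i).ne']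
  have hpointwise : 3 / 2 * ∑ i, (y i - x i) ^ 2 / (y i + 2 * x i)
      ≤ ∑ i, bregmanMulLog (x i) (y i) := by
    rw [mul_sum]
    exact sum_le_sum fun i _ => three_halves_mul_sq_div_le_bregmanMulLog (hx i) (hy i)
  have hmass : 0 ≤ ∑ i, x i := sum_nonneg fun i _ => (hx i).le
  calc (∑ i, |y i - x i|) ^ 2
      ≤ 2 * (∑ i, x i) * (3 / 2 * ∑ i, (y i - x i) ^ 2 / (y i + 2 * x i)) := by
        linarith [hweight ▸ hcauchySchwarz]
    _ ≤ 2 * (∑ i, x i) * ∑ i, bregmanMulLog (x i) (y i) := by gcongr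

theorem rot_objective_strongly_convex_l1_general
    (p : ℕ) (γ : ℝ) (hγ : 0 < γ)
    (c : Fin p → Fin p → ℝ)
    (a₁ : Fin p → ℝ)
    (ha₁ : (∀ i, 0 ≤ a₁ i) ∧ ∑ i, a₁ i = 1)
    (F : (Fin p → Fin p → ℝ) → ℝ)
    (hF : ∀ X, F X = γ * (∑ i, ∑ j, X i j * Real.log (X i j)) + ∑ i, ∑ j, c i j * X i j)
    (X Y : Fin p → Fin p → ℝ)
    (hXpos : ∀ i j, 0 < X i j) (hYpos : ∀ i j, 0 < Y i j)
    (hXrow : ∀ i, ∑ j, X i j = a₁ i)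
    (hYrow : ∀ i, ∑ j, Y i j = a₁ i) :
    F Y ≥ F X + (∑ i, ∑ j, (γ * (Real.log (X i j) + 1) + c i j) * (Y i j - X i j)) +
      (γ / 2) * (∑ i, ∑ j, |Y i j - X i j|) ^ 2 := by
  have hmass : ∀ Z : Fin p → Fin p → ℝ, (∀ i, ∑ j, Z i j = a₁ i) →
      ∑ k : Fin p × Fin p, Z k.1 k.2 = 1 := fun Z hZ => by
    rw [Fintype.sum_prod_type', sum_congr rfl fun i _ => hZ i, ha₁.2]
  have hpinsker := sq_sum_abs_sub_le_two_mul_sum_bregmanMulLog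
    (x := fun k : Fin p × Fin p => X k.1 k.2) (y := fun k => Y k.1 k.2)
    (fun k => hXpos k.1 k.2) (fun k => hYpos k.1 k.2) (by rw [hmass X hXrow, hmass Y hYrow])
  simp only [hmass X hXrow, Fintype.sum_prod_type, mul_one] at hpinsker
  have hbregman : F Y - (F X + ∑ i, ∑ j, (γ * (log (X i j) + 1) + c i j) * (Y i j - X i j))
      = γ * ∑ i, ∑ j, bregmanMulLog (X i j) (Y i j) := by
    simp only [hF, bregmanMulLog, mul_sum, ← sum_add_distrib, ← sum_sub_distrib]
    exact sum_congr rfl fun i _ => sum_congr rfl fun j _ => by ring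
  linarith [mul_le_mul_of_nonneg_left hpinsker hγ.le]

/-- The regularized optimal transport objective
`F(X) = γ ∑ x_{ij} ln x_{ij} + ∑ c_{ij} x_{ij}` is `γ`-strongly convex with respect to the
`ℓ₁` norm on the (relative interior of the) transportation polytope
`{X ≥ 0 : X e = a₁, Xᵀ e = a₂}` with `a₁, a₂` in the unit simplex:
`F(Y) ≥ F(X) + ⟨∇F(X), Y - X⟩ + (γ/2) ‖Y - X‖₁²`. -/
theorem rot_objective_strongly_convex_l1
    (p : ℕ) (γ : ℝ) (hγ : 0 < γ)
    (c : Fin p → Fin p → ℝ) (hc : ∀ i j, 0 ≤ c i j)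
    (a₁ a₂ : Fin p → ℝ)
    (ha₁ : (∀ i, 0 ≤ a₁ i) ∧ ∑ i, a₁ i = 1) (ha₂ : (∀ i, 0 ≤ a₂ i) ∧ ∑ i, a₂ i = 1)
    (F : (Fin p → Fin p → ℝ) → ℝ)
    (hF : ∀ X, F X = γ * (∑ i, ∑ j, X i j * Real.log (X i j)) + ∑ i, ∑ j, c i j * X i j)
    (X Y : Fin p → Fin p → ℝ)
    (hXpos : ∀ i j, 0 < X i j) (hYpos : ∀ i j, 0 < Y i j)
    (hXrow : ∀ i, ∑ j, X i j = a₁ i) (hXcol : ∀ j, ∑ i, X i j = a₂ j)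
    (hYrow : ∀ i, ∑ j, Y i j = a₁ i) (hYcol : ∀ j, ∑ i, Y i j = a₂ j) :
    F Y ≥ F X + (∑ i, ∑ j, (γ * (Real.log (X i j) + 1) + c i j) * (Y i j - X i j)) +
      (γ / 2) * (∑ i, ∑ j, |Y i j - X i j|) ^ 2 :=
  rot_objective_strongly_convex_l1_general p γ hγ c a₁ ha₁ F hF X Y hXpos hYpos hXrow hYrow
end
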